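/- Let x be a run on m components and let x' be obtained from x by swapping the entries in positions s and t with 1 ≤ s < t ≤ m. Let P_st be the set of unordered component pairs consisting of {x_s, x_t} together with {x_s, x_ℓ} and {x_t, x_ℓ} for all s < ℓ < t. Then for every run y, k(x', y) = k(x, y) + Σ_{{u,v} ∈ P_st} z_{{u,v}}(x) · z_{{u,v}}(y), where for an unordered pair {u,v} of distinct components z_{{u,v}}(w) = z_{min(u,v), max(u,v)}(w). -/

import Mathlib

/-- A run (addition order) on `m` components: position `r` receives component `x r`.
The position map `π_x` is `x.symm`. -/
abbrev Run (m : ℕ) := Equiv.Perm (Fin m)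

/-- Kendall tau distance between two runs. -/
def kendall {m : ℕ} (x y : Run m) : ℕ :=
  (Finset.univ.filter fun p : Fin m × Fin m =>
    p.1 < p.2 ∧
      (((x.symm p.1 : ℕ) : ℤ) - ((x.symm p.2 : ℕ) : ℤ)) *
        (((y.symm p.1 : ℕ) : ℤ) - ((y.symm p.2 : ℕ) : ℤ)) < 0).card

/-- The PWO factor `z_ab(x)` for a pair `p = (a,b)` with `a < b`. -/
def zab {m : ℕ} (x : Run m) (p : Fin m × Fin m) : ℤ :=
  if x.symm p.1 < x.symm p.2 then 1 else -1

/-- positional predicate: pair {u,v} affected by swapping positions s,t -/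
def Qexp {m : ℕ} (s t u v : Fin m) : Prop :=
  (u = s ∧ v = t) ∨ (u = t ∧ v = s) ∨ (u = s ∧ s < v ∧ v < t) ∨
  (v = s ∧ s < u ∧ u < t) ∨ (u = t ∧ s < v ∧ v < t) ∨ (v = t ∧ s < u ∧ u < t)

lemma finset_pair_eq_pair_iff {α : Type*} [DecidableEq α] {a b c d : α} :
    ({a, b} : Finset α) = {c, d} ↔ (a = c ∧ b = d) ∨ (a = d ∧ b = c) := by
  rw [← Finset.coe_inj]
  push_cast
  exact Set.pair_eq_pair_iff

lemma swap_lt_flip {m : ℕ} {s t u v : Fin m} (huv : u ≠ v) (hq : Qexp s t u v) :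
    (Equiv.swap s t u < Equiv.swap s t v ↔ ¬ u < v) := by
  have huv' : (u : ℕ) ≠ (v : ℕ) := fun h => huv (Fin.ext h)
  simp only [Qexp, Fin.lt_def, Fin.ext_iff] at hq
  simp only [Equiv.swap_apply_def, Fin.lt_def, apply_ite (Fin.val)]
  split_ifs <;> simp only [Fin.ext_iff] at * <;> omega

lemma swap_lt_same {m : ℕ} {s t u v : Fin m} (hst : s < t) (huv : u ≠ v)
    (hq : ¬ Qexp s t u v) :
    (Equiv.swap s t u < Equiv.swap s t v ↔ u < v) := by
  have huv' : (u : ℕ) ≠ (v : ℕ) := fun h => huv (Fin.ext h)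
  have hst' : (s : ℕ) < (t : ℕ) := hst
  simp only [Qexp, Fin.lt_def, Fin.ext_iff, not_or, not_and] at hq
  simp only [Equiv.swap_apply_def, Fin.lt_def, apply_ite (Fin.val)]
  obtain ⟨q1, q2, q3, q4, q5, q6⟩ := hq
  split_ifs <;> simp only [Fin.ext_iff] at * <;> omega

lemma sign_flip (A A' B : ℤ) (hA : A ≠ 0) (hA' : A' ≠ 0) (hB : B ≠ 0)
    (hflip : A' < 0 ↔ 0 < A) :
    (if A' * B < 0 then (1:ℤ) else 0) =
      (if A * B < 0 then 1 else 0) +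
        (if A < 0 then (1:ℤ) else -1) * (if B < 0 then (1:ℤ) else -1) := by
  simp only [mul_neg_iff]
  split_ifs <;> omega

lemma prod_neg_iff (A A' B : ℤ) (hA : A ≠ 0) (hA' : A' ≠ 0)
    (hsame : A' < 0 ↔ A < 0) : (A' * B < 0 ↔ A * B < 0) := by
  rw [mul_neg_iff, mul_neg_iff]
  omega


/-- Swapping the entries in positions `s` and `t` of a run `x` gives the run
`x' = x ∘ (s t)`; the set `P_st` of affected unordered component pairs consists of
`{x_s, x_t}` together with `{x_s, x_ℓ}` and `{x_t, x_ℓ}` for `s < ℓ < t`.  Here each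
unordered pair `{u, v}` is represented by the ordered pair `(a, b)` with `a < b`, so that
`z_{{u,v}} = z_{min(u,v), max(u,v)} = z_ab`. -/
theorem stmt18 {m : ℕ} (hm : 2 ≤ m) (x : Run m) (s t : Fin m) (hst : s < t) (y : Run m) :
    (kendall ((Equiv.swap s t).trans x) y : ℤ) =
      (kendall x y : ℤ) +
        ∑ p ∈ Finset.univ.filter (fun p : Fin m × Fin m => p.1 < p.2 ∧
            (({p.1, p.2} : Finset (Fin m)) = {x s, x t} ∨
              ∃ ℓ : Fin m, s < ℓ ∧ ℓ < t ∧
                (({p.1, p.2} : Finset (Fin m)) = {x s, x ℓ} ∨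
                  ({p.1, p.2} : Finset (Fin m)) = {x t, x ℓ}))),
          zab x p * zab y p := by
  classical
  have hsum : ∀ w : Run m, (kendall w y : ℤ) =
      ∑ p : Fin m × Fin m, if p.1 < p.2 ∧
        (((w.symm p.1 : ℕ) : ℤ) - ((w.symm p.2 : ℕ) : ℤ)) *
          (((y.symm p.1 : ℕ) : ℤ) - ((y.symm p.2 : ℕ) : ℤ)) < 0 then (1:ℤ) else 0 := by
    intro w
    rw [kendall, Finset.natCast_card_filter]
  rw [hsum, hsum, Finset.sum_filter, ← Finset.sum_add_distrib]
  refine Finset.sum_congr rfl fun p _ => ?_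
  by_cases hab : p.1 < p.2
  swap
  · simp [hab]
  simp only [hab, true_and]
  set u : Fin m := x.symm p.1 with hu
  set v : Fin m := x.symm p.2 with hv
  have hx'symm : ∀ c, ((Equiv.swap s t).trans x).symm c = Equiv.swap s t (x.symm c) := by
    intro c; simp
  rw [hx'symm, hx'symm]
  have huv : u ≠ v := fun h => (Fin.lt_irrefl p.1) (by
    have := x.symm.injective h
    exact this ▸ hab)
  have hu'v' : y.symm p.1 ≠ y.symm p.2 := fun h => (Fin.lt_irrefl p.1) (by
    have := y.symm.injective h
    exact this ▸ hab)
  have hσ : Equiv.swap s t u ≠ Equiv.swap s t v := fun h => huv ((Equiv.swap s t).injective h)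
  -- integer quantities
  have hne : ∀ {a b : Fin m}, a ≠ b → ((a : ℕ) : ℤ) - ((b : ℕ) : ℤ) ≠ 0 := by
    intro a b h
    have : (a : ℕ) ≠ (b : ℕ) := fun hh => h (Fin.ext hh)
    omega
  have hA : ((u : ℕ) : ℤ) - ((v : ℕ) : ℤ) ≠ 0 := hne huv
  have hA' : ((Equiv.swap s t u : ℕ) : ℤ) - ((Equiv.swap s t v : ℕ) : ℤ) ≠ 0 := hne hσ
  have hB : ((y.symm p.1 : ℕ) : ℤ) - ((y.symm p.2 : ℕ) : ℤ) ≠ 0 := hne hu'v'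
  -- the pair condition in positional form
  have hQ : (({p.1, p.2} : Finset (Fin m)) = {x s, x t} ∨
      ∃ ℓ : Fin m, s < ℓ ∧ ℓ < t ∧
        (({p.1, p.2} : Finset (Fin m)) = {x s, x ℓ} ∨
          ({p.1, p.2} : Finset (Fin m)) = {x t, x ℓ})) ↔ Qexp s t u v := by
    simp only [finset_pair_eq_pair_iff, ← Equiv.symm_apply_eq, ← hu, ← hv, Qexp]
    constructor
    · rintro ((⟨h1, h2⟩ | ⟨h1, h2⟩) |
        ⟨ℓ, h1, h2, (⟨h3, h4⟩ | ⟨h3, h4⟩) | (⟨h3, h4⟩ | ⟨h3, h4⟩)⟩)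
      · exact Or.inl ⟨h1, h2⟩
      · exact Or.inr (Or.inl ⟨h1, h2⟩)
      · exact Or.inr (Or.inr (Or.inl ⟨h3, h4 ▸ ⟨h1, h2⟩⟩))
      · exact Or.inr (Or.inr (Or.inr (Or.inl ⟨h4, h3 ▸ ⟨h1, h2⟩⟩)))
      · exact Or.inr (Or.inr (Or.inr (Or.inr (Or.inl ⟨h3, h4 ▸ ⟨h1, h2⟩⟩))))
      · exact Or.inr (Or.inr (Or.inr (Or.inr (Or.inr ⟨h4, h3 ▸ ⟨h1, h2⟩⟩))))
    · rintro (⟨h1, h2⟩ | ⟨h1, h2⟩ | ⟨h1, h2, h3⟩ | ⟨h1, h2, h3⟩ | ⟨h1, h2, h3⟩ | ⟨h1, h2, h3⟩)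
      · exact Or.inl (Or.inl ⟨h1, h2⟩)
      · exact Or.inl (Or.inr ⟨h1, h2⟩)
      · exact Or.inr ⟨v, h2, h3, Or.inl (Or.inl ⟨h1, rfl⟩)⟩
      · exact Or.inr ⟨u, h2, h3, Or.inl (Or.inr ⟨rfl, h1⟩)⟩
      · exact Or.inr ⟨v, h2, h3, Or.inr (Or.inl ⟨h1, rfl⟩)⟩
      · exact Or.inr ⟨u, h2, h3, Or.inr (Or.inr ⟨rfl, h1⟩)⟩
  -- rewrite zab in sign form
  have hlt : ∀ a b : Fin m, (a < b) ↔ ((a : ℕ) : ℤ) - ((b : ℕ) : ℤ) < 0 := by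
    intro a b
    rw [Fin.lt_def, sub_neg]
    exact_mod_cast Iff.rfl
  have hzx : zab x p = if ((u : ℕ) : ℤ) - ((v : ℕ) : ℤ) < 0 then (1:ℤ) else -1 := by
    rw [zab, ← hu, ← hv]
    exact if_congr (hlt u v) rfl rfl
  have hzy : zab y p =
      if ((y.symm p.1 : ℕ) : ℤ) - ((y.symm p.2 : ℕ) : ℤ) < 0 then (1:ℤ) else -1 := by
    rw [zab]
    exact if_congr (hlt _ _) rfl rfl
  rw [hzx, hzy]
  by_cases hq : Qexp s t u v
  · rw [if_pos (hQ.mpr hq)]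
    have h5 := swap_lt_flip huv hq
    simp only [Fin.lt_def] at h5
    have huv' : (u : ℕ) ≠ (v : ℕ) := fun h => huv (Fin.ext h)
    have hflip : ((Equiv.swap s t u : ℕ) : ℤ) - ((Equiv.swap s t v : ℕ) : ℤ) < 0 ↔
        0 < ((u : ℕ) : ℤ) - ((v : ℕ) : ℤ) := by omega
    exact sign_flip _ _ _ hA hA' hB hflip
  · rw [if_neg fun h => hq (hQ.mp h), add_zero]
    have h5 := swap_lt_same hst huv hq
    simp only [Fin.lt_def] at h5
    have hsame : ((Equiv.swap s t u : ℕ) : ℤ) - ((Equiv.swap s t v : ℕ) : ℤ) < 0 ↔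
        ((u : ℕ) : ℤ) - ((v : ℕ) : ℤ) < 0 := by omega
    rw [if_congr (prod_neg_iff _ _ _ hA hA' hsame) rfl rfl]
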